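/- Let n, k be integers with 2 ≤ k ≤ n, let u ∈ ℂ^n be a unit vector supported on at most k coordinates, let x be a real number with 0 < x ≤ 1, and let δ be a real number with 0 < δ ≤ x/(2n). Set D := (1 − δ·sqrt(n))·(x·I/n + (1−x)·u u*). Then for every Hermitian matrix E ∈ ℂ^{n×n} with ‖E‖_F ≤ δ, the matrix D + E belongs to I_k; that is, the closed Frobenius-norm ball of radius δ centered at D is contained in I_k. -/

import Mathlib

open Matrix BigOperators Finset ComplexOrder

noncomputable section

/-- The number of nonzero entries of a vector in `ℂ^n`. -/
def suppCard {n : ℕ} (v : Fin n → ℂ) : ℕ :=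
  (Finset.univ.filter fun i => v i ≠ 0).card

/-- A matrix `X` is `k`-incoherent if it can be written as `∑ vᵢ vᵢ*` where each `vᵢ`
has at most `k` nonzero entries. -/
def KIncoherent {n : ℕ} (k : ℕ) (X : Matrix (Fin n) (Fin n) ℂ) : Prop :=
  ∃ (m : ℕ) (v : Fin m → (Fin n → ℂ)),
    (∀ i, suppCard (v i) ≤ k) ∧ X = ∑ i, vecMulVec (v i) (star (v i))

/-- The set `I_k` of positive semidefinite, `k`-incoherent matrices with trace at most `1`. -/
def Ik (n k : ℕ) : Set (Matrix (Fin n) (Fin n) ℂ) :=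
  {X | X.PosSemidef ∧ KIncoherent k X ∧ X.trace.re ≤ 1}

/-- The Gram matrix of a list of vectors in `ℂ^d`. -/
def gramMatrix {n d : ℕ} (ψ : Fin n → (Fin d → ℂ)) : Matrix (Fin n) (Fin n) ℂ :=
  Matrix.of fun i j => star (ψ i) ⬝ᵥ ψ j

/-- A list of states `ψ₁, …, ψₙ` is `k`-learnable if there is a POVM indexed by the
`k`-element subsets of `{1, …, n}` such that `⟨ψᵢ, M_S ψᵢ⟩ = 0` whenever `i ∉ S`. -/
def KLearnable {n d : ℕ} (k : ℕ) (ψ : Fin n → (Fin d → ℂ)) : Prop :=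
  ∃ M : {S : Finset (Fin n) // S.card = k} → Matrix (Fin d) (Fin d) ℂ,
    (∀ S, (M S).PosSemidef) ∧ (∑ S, M S) = 1 ∧
    ∀ (S : {S : Finset (Fin n) // S.card = k}) (i : Fin n),
      i ∉ S.val → star (ψ i) ⬝ᵥ ((M S) *ᵥ ψ i) = 0

/-- The Frobenius norm of a square complex matrix. -/
def frobNorm {m : ℕ} (A : Matrix (Fin m) (Fin m) ℂ) : ℝ :=
  Real.sqrt (∑ i, ∑ j, ‖A i j‖ ^ 2)

/-!
Write `γ = 1 - δ√n`, so that `D + E = γ(1-x)·u u* + (c·I + E)` with `c = γx/n`. The first summand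
is a nonnegative multiple of `u u*`, hence `k`-incoherent. For the second, `‖E‖_F ≤ δ < c` makes the
comparison matrix of `c·I + E` (diagonal `Re aᵢᵢ`, off-diagonal `-|aᵢⱼ|`) positive definite, so it
is a nonsingular M-matrix and `M d = 1` has a positive solution `d`. Scaling by `diag d` turns
`c·I + E` into a diagonally dominant Hermitian matrix, and such a matrix is a sum of rank-one
matrices `w w*` with each `w` supported on two coordinates (one for every pair `(i, j)`, plus a
nonnegative diagonal remainder). Finally `Re Tr (D + E) = γ + Re Tr E ≤ γ + √n‖E‖_F ≤ 1`.
-/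

open ComplexConjugate

theorem Matrix.exists_pos_mulVec_eq_one {ι : Type*} [Fintype ι] [DecidableEq ι]
    {M : Matrix ι ι ℝ} (hoff : ∀ i j, i ≠ j → M i j ≤ 0)
    (hpos : ∀ y, y ≠ 0 → 0 < y ⬝ᵥ M *ᵥ y) :
    ∃ d : ι → ℝ, (∀ i, 0 < d i) ∧ M *ᵥ d = 1 := by
  have hdet : IsUnit M.det := by
    refine isUnit_iff_ne_zero.mpr fun h => ?_
    obtain ⟨v, hv, hMv⟩ := exists_mulVec_eq_zero_iff.mpr h
    simpa [hMv] using hpos v hv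
  set d := M⁻¹ *ᵥ 1
  have hMd : M *ᵥ d = 1 := by simp [d, mulVec_mulVec, mul_nonsing_inv _ hdet]
  -- `d⁻ = 0` because `d⁻ ⬝ M d⁻ = d⁻ ⬝ M d⁺ - ∑ d⁻ ≤ 0`: the cross terms are products of
  -- nonpositive off-diagonal entries with nonnegative numbers, and `d⁺ i * d⁻ i = 0`.
  have hneg : d⁻ = 0 := by
    by_contra hne
    have hcross : d⁻ ⬝ᵥ M *ᵥ d⁺ ≤ 0 := by
      simp only [dotProduct, mulVec, mul_sum]
      refine sum_nonpos fun i _ => sum_nonpos fun j _ => ?_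
      rcases eq_or_ne i j with rfl | hij
      · have : (d i)⁻ * (d i)⁺ = 0 := by
          rcases le_total (d i) 0 with h | h <;> simp [h]
        simp only [Pi.negPart_apply, Pi.posPart_apply]
        rw [mul_left_comm, this, mul_zero]
      · exact mul_nonpos_of_nonneg_of_nonpos (negPart_nonneg _)
          (mul_nonpos_of_nonpos_of_nonneg (hoff i j hij) (posPart_nonneg _))
    have hsum : 0 ≤ d⁻ ⬝ᵥ M *ᵥ d := by
      rw [hMd]; exact sum_nonneg fun i _ => by simp [negPart_nonneg]
    have hquad := hpos _ hne
    have hsplit : d⁻ ⬝ᵥ M *ᵥ d = d⁻ ⬝ᵥ M *ᵥ d⁺ - d⁻ ⬝ᵥ M *ᵥ d⁻ := by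
      rw [← dotProduct_sub, ← mulVec_sub, posPart_sub_negPart]
    linarith
  have hd : ∀ i, 0 ≤ d i := fun i => by simpa using congrFun hneg i
  refine ⟨d, fun i => (hd i).lt_of_ne fun h0 => ?_, hMd⟩
  have hrow : M i i * d i + ∑ j ∈ univ.erase i, M i j * d j = 1 := by
    rw [add_sum_erase univ (fun j => M i j * d j) (mem_univ i)]
    exact congrFun hMd i
  have hoffsum : ∑ j ∈ univ.erase i, M i j * d j ≤ 0 :=
    sum_nonpos fun j hj => mul_nonpos_of_nonpos_of_nonneg
      (hoff i j (ne_of_mem_erase hj).symm) (hd j)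
  rw [← h0, mul_zero, zero_add] at hrow
  linarith

section Support

variable {n : ℕ}

lemma suppCard_le_card {v : Fin n → ℂ} {S : Finset (Fin n)} (h : ∀ l, v l ≠ 0 → l ∈ S) :
    suppCard v ≤ S.card :=
  card_le_card fun l hl => h l (mem_filter.mp hl).2

lemma suppCard_mul_le (s v : Fin n → ℂ) : suppCard (s * v) ≤ suppCard v :=
  card_le_card fun l hl => by
    simp only [mem_filter, mem_univ, true_and, Pi.mul_apply] at hl ⊢
    exact right_ne_zero_of_mul hl

lemma suppCard_single_le (i : Fin n) (a : ℂ) : suppCard (Pi.single i a) ≤ 1 :=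
  (suppCard_le_card (S := {i}) fun l hl => by by_contra h; simp_all).trans_eq (card_singleton i)

lemma suppCard_single_add_single_le (i j : Fin n) (a b : ℂ) :
    suppCard (Pi.single i a + Pi.single j b) ≤ 2 := by
  refine (suppCard_le_card (S := {i, j}) fun l hl => ?_).trans card_le_two
  by_contra hlij
  simp only [mem_insert, mem_singleton, not_or] at hlij
  simp [hlij.1, hlij.2] at hl

end Support

namespace KIncoherent

variable {n k : ℕ} {X Y : Matrix (Fin n) (Fin n) ℂ}

lemma zero : KIncoherent k (0 : Matrix (Fin n) (Fin n) ℂ) :=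
  ⟨0, Fin.elim0, fun i => i.elim0, by simp⟩

lemma vecMulVec_star {v : Fin n → ℂ} (h : suppCard v ≤ k) :
    KIncoherent k (vecMulVec v (star v)) :=
  ⟨1, fun _ => v, fun _ => h, by simp⟩

lemma add (hX : KIncoherent k X) (hY : KIncoherent k Y) : KIncoherent k (X + Y) := by
  obtain ⟨m₁, v₁, hs₁, rfl⟩ := hX
  obtain ⟨m₂, v₂, hs₂, rfl⟩ := hY
  refine ⟨m₁ + m₂, Fin.append v₁ v₂, Fin.addCases (by simpa) (by simpa), ?_⟩
  simp [Fin.sum_univ_add]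

lemma sum {ι : Type*} (s : Finset ι) {f : ι → Matrix (Fin n) (Fin n) ℂ}
    (h : ∀ i ∈ s, KIncoherent k (f i)) : KIncoherent k (∑ i ∈ s, f i) :=
  sum_induction f _ (fun _ _ => add) zero h

lemma sum_vecMulVec_star {ι : Type*} [Fintype ι] {v : ι → Fin n → ℂ}
    (h : ∀ i, suppCard (v i) ≤ k) : KIncoherent k (∑ i, vecMulVec (v i) (star (v i))) :=
  sum _ fun i _ => vecMulVec_star (h i)

lemma mono {l : ℕ} (hX : KIncoherent k X) (hkl : k ≤ l) : KIncoherent l X := by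
  obtain ⟨m, v, hs, rfl⟩ := hX
  exact ⟨m, v, fun i => (hs i).trans hkl, rfl⟩

lemma posSemidef (hX : KIncoherent k X) : X.PosSemidef := by
  obtain ⟨m, v, -, rfl⟩ := hX
  exact posSemidef_sum _ fun i _ => posSemidef_vecMulVec_self_star (v i)

lemma diagonal_mul_mul_diagonal (hX : KIncoherent k X) (s : Fin n → ℂ) :
    KIncoherent k (diagonal s * X * diagonal (star s)) := by
  obtain ⟨m, v, hs, rfl⟩ := hX
  refine ⟨m, fun i => s * v i, fun i => (suppCard_mul_le _ _).trans (hs i), ?_⟩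
  rw [mul_sum, sum_mul]
  refine sum_congr rfl fun i _ => ?_
  ext p q
  simp [diagonal_mul, mul_diagonal, vecMulVec_apply]
  ring

lemma real_smul (hX : KIncoherent k X) {t : ℝ} (ht : 0 ≤ t) : KIncoherent k ((t : ℂ) • X) := by
  convert hX.diagonal_mul_mul_diagonal fun _ => (√t : ℂ) using 1
  ext p q
  simp only [Matrix.smul_apply, diagonal_mul, mul_diagonal, Pi.star_apply, Complex.star_def,
    Complex.conj_ofReal, smul_eq_mul]
  rw [mul_right_comm, ← Complex.ofReal_mul, Real.mul_self_sqrt ht]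

lemma diagonal_ofReal {r : Fin n → ℝ} (hr : ∀ i, 0 ≤ r i) (hk : 1 ≤ k) :
    KIncoherent k (diagonal fun i => (r i : ℂ)) := by
  have : diagonal (fun i => (r i : ℂ)) =
      ∑ i, vecMulVec (Pi.single i (√(r i) : ℂ)) (star (Pi.single i (√(r i) : ℂ))) := by
    ext p q
    rw [Matrix.sum_apply]
    by_cases hpq : p = q
    · subst hpq
      simp [vecMulVec_apply, Pi.single_apply, ← Complex.ofReal_mul, Real.mul_self_sqrt (hr p)]
    · simp [vecMulVec_apply, Pi.single_apply, hpq]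
  rw [this]
  exact sum_vecMulVec_star fun i => (suppCard_single_le _ _).trans hk

end KIncoherent

lemma Complex.exists_mul_conj_eq_half (z : ℂ) :
    ∃ a b : ℂ, a * conj a = ‖z‖ / 2 ∧ a * conj b = z / 2 ∧ b * conj b = ‖z‖ / 2 := by
  rcases eq_or_ne z 0 with rfl | hz
  · exact ⟨0, 0, by simp⟩
  set r : ℝ := √(‖z‖ / 2)
  have hr : (r : ℂ) * r = ‖z‖ / 2 := by
    rw [← Complex.ofReal_mul, Real.mul_self_sqrt (by positivity)]
    push_cast; ring
  have hzz : conj z * z = (‖z‖ : ℂ) ^ 2 := Complex.conj_mul' z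
  refine ⟨r, r * (conj z / ‖z‖), ?_, ?_, ?_⟩ <;>
    simp only [map_mul, map_div₀, Complex.conj_ofReal, Complex.conj_conj]
  · exact hr
  · rw [← mul_assoc, hr]
    field_simp
  · calc (r : ℂ) * (conj z / ‖z‖) * (r * (z / ‖z‖))
        = (r * r) * (conj z * z) / (‖z‖ : ℂ) ^ 2 := by ring
      _ = ‖z‖ / 2 := by rw [hr, hzz]; field_simp

theorem kIncoherent_two_of_diagDominant {n : ℕ} {A : Matrix (Fin n) (Fin n) ℂ}
    (hA : A.IsHermitian) (hdom : ∀ i, ∑ j ∈ univ.erase i, ‖A i j‖ ≤ (A i i).re) :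
    KIncoherent 2 A := by
  set O : Matrix (Fin n) (Fin n) ℂ := of fun i j => if i = j then 0 else A i j
  have hO_norm : ∀ i j, ‖O j i‖ = ‖O i j‖ := fun i j => by
    by_cases h : i = j <;> simp [O, h, eq_comm, ← hA.apply i j]
  have hO_row : ∀ i, ∑ j, ‖O i j‖ = ∑ j ∈ univ.erase i, ‖A i j‖ := fun i => by
    rw [← add_sum_erase univ (fun j => ‖O i j‖) (mem_univ i)]
    simp only [O, of_apply, if_true, norm_zero, zero_add]
    exact sum_congr rfl fun j hj => by simp [(ne_of_mem_erase hj).symm]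
  -- Each entry `O i j` is split into a rank-one matrix supported on `{i, j}` carrying `O i j / 2`
  -- off the diagonal and `‖O i j‖ / 2` on it; the two ordered pairs `(i, j)`, `(j, i)` together
  -- give back `O i j`, and diagonal dominance pays for the diagonal.
  choose a b ha hab hb using Complex.exists_mul_conj_eq_half
  have hba : ∀ z, b z * conj (a z) = conj z / 2 := fun z => by
    rw [← Complex.conj_conj (b z), ← map_mul, mul_comm, hab, map_div₀, map_ofNat]
  set w : Fin n × Fin n → Fin n → ℂ := fun z =>
    Pi.single z.1 (a (O z.1 z.2)) + Pi.single z.2 (b (O z.1 z.2))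
  set r : Fin n → ℝ := fun i => (A i i).re - ∑ j, ‖O i j‖
  have hA_eq : A = diagonal (fun i => (r i : ℂ)) + ∑ z, vecMulVec (w z) (star (w z)) := by
    ext p q
    rw [Matrix.add_apply, Matrix.sum_apply, Fintype.sum_prod_type]
    rcases eq_or_ne p q with rfl | hpq
    · have hOpp : O p p = 0 := by simp [O]
      simp only [w, r, vecMulVec_apply, Pi.add_apply, Pi.single_apply, star_add, Pi.star_single,
        RCLike.star_def, diagonal_apply_eq, Complex.ofReal_sub, Complex.ofReal_sum, mul_add,
        add_mul, mul_ite, ite_mul, mul_zero, zero_mul, ha, hb, hab, hba, sum_add_distrib,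
        sum_ite_irrel, sum_const_zero, sum_ite_eq, mem_univ, ↓reduceIte, hO_norm p, hOpp,
        map_zero, zero_div, add_zero, zero_add]
      conv_lhs => rw [← Complex.conj_eq_iff_re.mp (hA.apply p p)]
      rw [← sum_div]
      ring
    · simp [w, vecMulVec_apply, Pi.single_apply, add_mul, mul_add, sum_add_distrib, ite_mul,
        mul_ite, hpq, hab, hba, O, hpq.symm, ← hA.apply p q]
  rw [hA_eq]
  refine (KIncoherent.diagonal_ofReal (fun i => ?_) one_le_two).add
    (KIncoherent.sum_vecMulVec_star fun z => suppCard_single_add_single_le _ _ _ _)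
  simpa [r, hO_row] using hdom i

theorem kIncoherent_two_of_scaled_diagDominant {n : ℕ} {A : Matrix (Fin n) (Fin n) ℂ}
    (hA : A.IsHermitian) {d : Fin n → ℝ} (hd : ∀ i, 0 < d i)
    (hdom : ∀ i, ∑ j ∈ univ.erase i, ‖A i j‖ * d j ≤ (A i i).re * d i) :
    KIncoherent 2 A := by
  set D : Fin n → ℂ := fun i => (d i : ℂ)
  have hentry : ∀ i j, (diagonal D * A * diagonal (star D)) i j = d i * A i j * d j := by
    simp [D, diagonal_mul, mul_diagonal]
  have hscaled : KIncoherent 2 (diagonal D * A * diagonal (star D)) := by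
    refine kIncoherent_two_of_diagDominant ?_ fun i => ?_
    · simpa [diagonal_conjTranspose] using isHermitian_mul_mul_conjTranspose (diagonal D) hA
    · simp only [hentry, norm_mul, Complex.norm_real, Real.norm_of_nonneg (hd _).le]
      rw [Complex.re_mul_ofReal, Complex.re_ofReal_mul]
      simp_rw [mul_assoc, ← mul_sum]
      exact mul_le_mul_of_nonneg_left (hdom i) (hd i).le
  convert hscaled.diagonal_mul_mul_diagonal D⁻¹ using 1
  ext i j
  simp only [mul_diagonal, diagonal_mul, Pi.inv_apply, Pi.star_apply, RCLike.star_def,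
    Complex.conj_ofReal, star_inv₀, D]
  have hD0 : ∀ i, (d i : ℂ) ≠ 0 := fun i => Complex.ofReal_ne_zero.mpr (hd i).ne'
  field_simp [hD0 i, hD0 j]

def comparisonMatrix {n : ℕ} (A : Matrix (Fin n) (Fin n) ℂ) : Matrix (Fin n) (Fin n) ℝ :=
  of fun i j => if i = j then (A i i).re else -‖A i j‖

theorem kIncoherent_two_of_comparisonMatrix_pos {n : ℕ} {A : Matrix (Fin n) (Fin n) ℂ}
    (hA : A.IsHermitian) (hpos : ∀ y, y ≠ 0 → 0 < y ⬝ᵥ comparisonMatrix A *ᵥ y) :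
    KIncoherent 2 A := by
  obtain ⟨d, hd, hMd⟩ := Matrix.exists_pos_mulVec_eq_one
    (fun i j hij => by simp [comparisonMatrix, hij]) hpos
  refine kIncoherent_two_of_scaled_diagDominant hA hd fun i => ?_
  have hrow := congrFun hMd i
  rw [mulVec, dotProduct, ← add_sum_erase univ _ (mem_univ i)] at hrow
  have hoff : ∑ j ∈ univ.erase i, comparisonMatrix A i j * d j
      = -∑ j ∈ univ.erase i, ‖A i j‖ * d j := by
    rw [← sum_neg_distrib]
    exact sum_congr rfl fun j hj => by simp [comparisonMatrix, (ne_of_mem_erase hj).symm]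
  have hdiag : comparisonMatrix A i i = (A i i).re := by simp [comparisonMatrix]
  rw [hoff, hdiag, Pi.one_apply] at hrow
  linarith

lemma neg_frobNorm_mul_le_comparisonMatrix {n : ℕ} (A : Matrix (Fin n) (Fin n) ℂ)
    (y : Fin n → ℝ) : -(frobNorm A * (y ⬝ᵥ y)) ≤ y ⬝ᵥ comparisonMatrix A *ᵥ y := by
  have hentry : ∀ i j, -(y i * (comparisonMatrix A i j * y j)) ≤ ‖A i j‖ * |y i * y j| := by
    intro i j
    rcases eq_or_ne i j with rfl | hij
    · have := neg_le_of_abs_le (Complex.abs_re_le_norm (A i i))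
      simp only [comparisonMatrix, of_apply, if_true, abs_mul_self]
      nlinarith [mul_self_nonneg (y i)]
    · simp only [comparisonMatrix, of_apply, if_neg hij]
      nlinarith [le_abs_self (y i * y j), norm_nonneg (A i j)]
  have hCS : ∑ z : Fin n × Fin n, ‖A z.1 z.2‖ * |y z.1 * y z.2| ≤ frobNorm A * (y ⬝ᵥ y) := by
    refine (Real.sum_mul_le_sqrt_mul_sqrt _ _ _).trans_eq ?_
    rw [frobNorm, ← Fintype.sum_prod_type']
    congr 1
    simp_rw [sq_abs, mul_pow]
    rw [Fintype.sum_prod_type]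
    simp only
    rw [← sum_mul_sum, Real.sqrt_mul_self (by positivity)]
    simp [dotProduct, sq]
  have hquad : -(y ⬝ᵥ comparisonMatrix A *ᵥ y) =
      ∑ z : Fin n × Fin n, -(y z.1 * (comparisonMatrix A z.1 z.2 * y z.2)) := by
    simp [dotProduct, mulVec, Fintype.sum_prod_type, mul_sum]
  have := sum_le_sum fun (z : Fin n × Fin n) (_ : z ∈ univ) => hentry z.1 z.2
  linarith

lemma comparisonMatrix_smul_one_add {n : ℕ} (c : ℝ) (E : Matrix (Fin n) (Fin n) ℂ) :
    comparisonMatrix ((c : ℂ) • 1 + E) = c • 1 + comparisonMatrix E := by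
  ext i j
  rcases eq_or_ne i j with rfl | hij <;> simp [comparisonMatrix, *]

theorem kIncoherent_two_smul_one_add {n : ℕ} {E : Matrix (Fin n) (Fin n) ℂ}
    (hE : E.IsHermitian) {c : ℝ} (hc : frobNorm E < c) :
    KIncoherent 2 ((c : ℂ) • 1 + E) := by
  refine kIncoherent_two_of_comparisonMatrix_pos
    ((isHermitian_one.smul (by simp [IsSelfAdjoint])).add hE) fun y hy => ?_
  have hyy : 0 < y ⬝ᵥ y := by simpa using dotProduct_self_star_pos_iff.mpr hy
  rw [comparisonMatrix_smul_one_add, add_mulVec, dotProduct_add, smul_mulVec, one_mulVec,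
    dotProduct_smul, smul_eq_mul]
  nlinarith [neg_frobNorm_mul_le_comparisonMatrix E y]

lemma re_trace_le_sqrt_mul_frobNorm {n : ℕ} (A : Matrix (Fin n) (Fin n) ℂ) :
    A.trace.re ≤ √n * frobNorm A := by
  calc A.trace.re = ∑ i, (A i i).re := by simp [trace]
    _ ≤ ∑ i, 1 * ‖A i i‖ := sum_le_sum fun i _ => by simpa using Complex.re_le_norm (A i i)
    _ ≤ √(∑ _i : Fin n, 1 ^ 2) * √(∑ i, ‖A i i‖ ^ 2) := Real.sum_mul_le_sqrt_mul_sqrt _ _ _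
    _ ≤ √n * frobNorm A := by
        simp only [one_pow, sum_const, card_univ, Fintype.card_fin, nsmul_eq_mul, mul_one]
        refine mul_le_mul_of_nonneg_left (Real.sqrt_le_sqrt (sum_le_sum fun i _ => ?_)) (by positivity)
        exact single_le_sum (f := fun j => ‖A i j‖ ^ 2) (fun _ _ => by positivity) (mem_univ i)

lemma re_trace_vecMulVec_star {n : ℕ} (u : Fin n → ℂ) :
    (vecMulVec u (star u)).trace.re = ∑ i, ‖u i‖ ^ 2 := by
  simp only [trace_vecMulVec, dotProduct, Pi.star_apply, RCLike.star_def, Complex.mul_conj',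
    Complex.re_sum]
  norm_cast

lemma half_lt_one_sub_mul_sqrt {n : ℕ} (hn : 2 ≤ n) {x δ : ℝ} (hx1 : x ≤ 1)
    (hδ : δ ≤ x / (2 * n)) : 1 / 2 < 1 - δ * √n := by
  have hn' : (2 : ℝ) ≤ n := by exact_mod_cast hn
  have hsqrt : √n * √n = n := Real.mul_self_sqrt (by positivity)
  have : δ * √n ≤ x / (2 * n) * √n := mul_le_mul_of_nonneg_right hδ (Real.sqrt_nonneg _)
  have : x / (2 * n) * √n < 1 / 2 := by
    rw [div_mul_eq_mul_div, div_lt_iff₀ (by positivity)]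
    nlinarith [Real.sqrt_nonneg n]
  linarith

theorem ball_around_Dx_subset_Ik_general (n k : ℕ) (hk : 2 ≤ k) (hkn : k ≤ n)
    (u : Fin n → ℂ) (hu : (∑ i, ‖u i‖ ^ 2) = 1) (hsupp : suppCard u ≤ k)
    (x δ : ℝ) (hx0 : 0 < x) (hx1 : x ≤ 1) (hδ : δ ≤ x / (2 * n)) :
    ∀ E : Matrix (Fin n) (Fin n) ℂ, E.IsHermitian → frobNorm E ≤ δ →
      (((1 - δ * Real.sqrt n : ℝ) : ℂ) •
          (((x / n : ℝ) : ℂ) • (1 : Matrix (Fin n) (Fin n) ℂ) +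
            ((1 - x : ℝ) : ℂ) • vecMulVec u (star u))) + E ∈ Ik n k := by
  intro E hE hEF
  set γ := 1 - δ * √n
  have hn : (0 : ℝ) < n := by exact_mod_cast (by omega : 0 < n)
  have hγ : 1 / 2 < γ := half_lt_one_sub_mul_sqrt (hk.trans hkn) hx1 hδ
  have hc : frobNorm E < γ * (x / n) := by
    have : 0 < (γ - 1 / 2) * (x / n) := mul_pos (by linarith) (by positivity)
    have : x / (2 * n) = 1 / 2 * (x / n) := by ring
    linarith
  have hdecomp : ((γ : ℂ) • (((x / n : ℝ) : ℂ) • (1 : Matrix (Fin n) (Fin n) ℂ) +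
        ((1 - x : ℝ) : ℂ) • vecMulVec u (star u))) + E =
      ((γ * (1 - x) : ℝ) : ℂ) • vecMulVec u (star u) + (((γ * (x / n) : ℝ) : ℂ) • 1 + E) := by
    push_cast
    module
  rw [hdecomp]
  have hinc := ((KIncoherent.vecMulVec_star hsupp).real_smul (by nlinarith : 0 ≤ γ * (1 - x))).add
    ((kIncoherent_two_smul_one_add hE hc).mono hk)
  refine ⟨hinc.posSemidef, hinc, ?_⟩
  have htrE := re_trace_le_sqrt_mul_frobNorm E
  have : √n * frobNorm E ≤ √n * δ := mul_le_mul_of_nonneg_left hEF (Real.sqrt_nonneg _)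
  have hxn : γ * (x / n) * n = γ * x := by field_simp
  simp only [trace_add, trace_smul, trace_one, Fintype.card_fin, smul_eq_mul, Complex.add_re,
    Complex.re_ofReal_mul, re_trace_vecMulVec_star, hu, Complex.natCast_re]
  linarith

/-- The closed Frobenius ball of radius `δ ≤ x/(2n)` centered at
`D = (1 - δ√n)(x·I/n + (1-x)·u u*)` is contained in `I_k`, whenever `u` is a unit vector
supported on at most `k` coordinates. -/
theorem ball_around_Dx_subset_Ik (n k : ℕ) (hk : 2 ≤ k) (hkn : k ≤ n)
    (u : Fin n → ℂ) (hu : (∑ i, ‖u i‖ ^ 2) = 1) (hsupp : suppCard u ≤ k)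
    (x δ : ℝ) (hx0 : 0 < x) (hx1 : x ≤ 1) (hδ0 : 0 < δ) (hδ : δ ≤ x / (2 * n)) :
    ∀ E : Matrix (Fin n) (Fin n) ℂ, E.IsHermitian → frobNorm E ≤ δ →
      (((1 - δ * Real.sqrt n : ℝ) : ℂ) •
          (((x / n : ℝ) : ℂ) • (1 : Matrix (Fin n) (Fin n) ℂ) +
            ((1 - x : ℝ) : ℂ) • vecMulVec u (star u))) + E ∈ Ik n k :=
  ball_around_Dx_subset_Ik_general n k hk hkn u hu hsupp x δ hx0 hx1 hδ
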